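/- There exists an n-Smullyan model which satisfies both F-Tarski (there is no M-predicate H with Φ(H) = False_M) and T-Tarski (there is no M-predicate H with Φ(H) = True_M), but satisfies neither F-Tarski+ (there is no M-predicate H such that False_M^+ = Φ(H) ∩ Sent_M^+) nor T-Tarski+ (there is no M-predicate H such that True_M^+ = Φ(H) ∩ Sent_M^+). Concretely, the simple model with Σ = {n, ♯} and Φ(♯) = {X ∈ Σ* : the number of occurrences of n in X is even}, which is an n-Smullyan model, is such a model. -/

import Mathlib

/-- A Smullyan model over a set of symbols `α`: a set `pred` of predicates
(finite strings over `α`) satisfying the prefix-freeness requirement (†), together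
with a naming function `phi` assigning a set of strings to each string
(only its values on `pred` are relevant). -/
structure SmullyanModel (α : Type) where
  pred : Set (List α)
  prefixFree : ∀ H ∈ pred, ∀ X : List α, X ≠ [] → H ++ X ∉ pred
  phi : List α → Set (List α)

namespace SmullyanModel

variable {α : Type} (M : SmullyanModel α)

/-- The set of `M`-sentences: strings of the form `H ++ X` with `H` a predicate. -/
def sent : Set (List α) := {S | ∃ H ∈ M.pred, ∃ X : List α, S = H ++ X}

/-- `Sent_M^+ = Sent_M \ Pred_M`. -/
def sentPlus : Set (List α) := M.sent \ M.pred

/-- `True_M`: the set of true `M`-sentences. -/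
def trueSet : Set (List α) := {S | ∃ H ∈ M.pred, ∃ X ∈ M.phi H, S = H ++ X}

/-- `True_M^+ = True_M \ Pred_M`. -/
def truePlus : Set (List α) := M.trueSet \ M.pred

/-- `False_M = Sent_M \ True_M`. -/
def falseSet : Set (List α) := M.sent \ M.trueSet

/-- `False_M^+ = Sent_M^+ \ True_M^+`. -/
def falsePlus : Set (List α) := M.sentPlus \ M.truePlus

/-- `M ⊨ S`. -/
def Sat (S : List α) : Prop := S ∈ M.trueSet

/-- `S ∈ Sent_M^+` is an `M`-fixed point of `H` if `M ⊨ S ↔ M ⊨ HS`. -/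
def IsFixedPoint (H S : List α) : Prop :=
  S ∈ M.sentPlus ∧ (M.Sat S ↔ M.Sat (H ++ S))

/-- `M` is an `n`-Smullyan model (with negation symbol `n : α`):
for every predicate `H`, `nH` is a predicate and `Φ(nH) = Σ* \ Φ(H)`. -/
def IsNModel (n : α) : Prop :=
  ∀ H ∈ M.pred, (n :: H) ∈ M.pred ∧ M.phi (n :: H) = {X : List α | X ∉ M.phi H}

/-- `M` is an `r`-Smullyan model (with repeat symbol `r : α`):
for every predicate `H`, `rH` is a predicate and `Φ(rH) = {K ∈ Pred : KK ∈ Φ(H)}`. -/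
def IsRModel (r : α) : Prop :=
  ∀ H ∈ M.pred, (r :: H) ∈ M.pred ∧
    M.phi (r :: H) = {K : List α | K ∈ M.pred ∧ K ++ K ∈ M.phi H}

/-- FPT: every `M`-predicate has an `M`-fixed point. -/
def FPT : Prop := ∀ H ∈ M.pred, ∃ S : List α, M.IsFixedPoint H S

/-- T-Tarski: no `M`-predicate names `True_M`. -/
def TTarski : Prop := ¬ ∃ H ∈ M.pred, M.phi H = M.trueSet

/-- F-Tarski: no `M`-predicate names `False_M`. -/
def FTarski : Prop := ¬ ∃ H ∈ M.pred, M.phi H = M.falseSet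

/-- T-Tarski⁺: there is no `M`-predicate `H` with `True_M⁺ = Φ(H) ∩ Sent_M⁺`. -/
def TTarskiPlus : Prop := ¬ ∃ H ∈ M.pred, M.truePlus = M.phi H ∩ M.sentPlus

/-- F-Tarski⁺: there is no `M`-predicate `H` with `False_M⁺ = Φ(H) ∩ Sent_M⁺`. -/
def FTarskiPlus : Prop := ¬ ∃ H ∈ M.pred, M.falsePlus = M.phi H ∩ M.sentPlus

/-- mG1. -/
def MG1 : Prop :=
  ∀ H ∈ M.pred, M.phi H ⊆ M.trueSet →
    ∃ S ∈ M.sent, M.Sat S ∧ S ∉ M.phi H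

/-- mG1⁺. -/
def MG1Plus : Prop :=
  ∀ H ∈ M.pred, M.phi H ∩ M.sentPlus ⊆ M.truePlus →
    ∃ S ∈ M.sentPlus, M.Sat S ∧ S ∉ M.phi H

/-- G1 (for `n`-Smullyan models). -/
def G1 (n : α) : Prop :=
  ∀ H ∈ M.pred, M.phi H ⊆ M.trueSet →
    ∃ S ∈ M.sent, S ∉ M.phi H ∧ (n :: S) ∉ M.phi H

/-- G1⁺ (for `n`-Smullyan models). -/
def G1Plus (n : α) : Prop :=
  ∀ H ∈ M.pred, M.phi H ∩ M.sentPlus ⊆ M.truePlus →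
    ∃ S ∈ M.sentPlus, S ∉ M.phi H ∧ (n :: S) ∉ M.phi H

/-- The predicate set of a simple model: strings `X♯` where `X` contains no `♯`. -/
def simplePred (sharp : α) : Set (List α) :=
  {L | ∃ X : List α, sharp ∉ X ∧ L = X ++ [sharp]}

end SmullyanModel

inductive SmSym where
  | n
  | sharp
deriving DecidableEq


/-!
Take `Φ(H) = {X : HX has an even number of `n`s}`, so that a sentence is true exactly when it
has an even number of `n`s; prefixing `n` flips that parity, so the model is an `n`-model.
Every sentence contains `♯`, while every `Φ(H)` contains the `♯`-free string `ε` or `n`;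
hence no `Φ(H)` is a set of sentences, which gives both Tarski properties. On `Sent⁺`, however,
`♯` names the true sentences and `n♯` the false ones.
-/

namespace SmullyanModel

variable {α : Type}

theorem sharp_mem_of_mem_simplePred {sharp : α} {H : List α} (hH : H ∈ simplePred sharp) :
    sharp ∈ H := by
  obtain ⟨X, -, rfl⟩ := hH
  simp

theorem simplePred_prefixFree (sharp : α) :
    ∀ H ∈ simplePred sharp, ∀ X : List α, X ≠ [] → H ++ X ∉ simplePred sharp := by
  rintro H ⟨Y, -, rfl⟩ X hX ⟨Z, hZ, hEq⟩
  obtain ⟨X', x, rfl⟩ := X.eq_nil_or_concat.resolve_left hX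
  rw [List.concat_eq_append, ← List.append_assoc] at hEq
  exact hZ ((List.append_inj' hEq rfl).1 ▸ by simp)

theorem sharp_mem_of_mem_sent {M : SmullyanModel α} {sharp : α} (hM : M.pred = simplePred sharp) {S : List α}
    (hS : S ∈ M.sent) : sharp ∈ S := by
  obtain ⟨H, hH, X, rfl⟩ := hS
  exact List.mem_append_left X (sharp_mem_of_mem_simplePred (hM ▸ hH))

variable (M : SmullyanModel α)

theorem trueSet_subset_sent : M.trueSet ⊆ M.sent := by
  rintro _ ⟨H, hH, X, -, rfl⟩
  exact ⟨H, hH, X, rfl⟩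

theorem tTarski_of_forall_not_subset_sent (h : ∀ H ∈ M.pred, ¬ M.phi H ⊆ M.sent) :
    M.TTarski := by
  rintro ⟨H, hH, hφ⟩
  exact h H hH (hφ ▸ M.trueSet_subset_sent)

theorem fTarski_of_forall_not_subset_sent (h : ∀ H ∈ M.pred, ¬ M.phi H ⊆ M.sent) :
    M.FTarski := by
  rintro ⟨H, hH, hφ⟩
  exact h H hH (hφ ▸ Set.sdiff_subset)

section TruthSet

variable {M} {T : Set (List α)} (hT : ∀ H ∈ M.pred, M.phi H = {X | H ++ X ∈ T})
include hT

theorem trueSet_eq_sent_inter : M.trueSet = M.sent ∩ T := by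
  ext S
  constructor
  · rintro ⟨H, hH, X, hX, rfl⟩
    rw [hT H hH] at hX
    exact ⟨⟨H, hH, X, rfl⟩, hX⟩
  · rintro ⟨⟨H, hH, X, rfl⟩, hS⟩
    exact ⟨H, hH, X, by rw [hT H hH]; exact hS, rfl⟩

theorem truePlus_eq_sentPlus_inter : M.truePlus = M.sentPlus ∩ T := by
  rw [truePlus, sentPlus, trueSet_eq_sent_inter hT, Set.inter_sdiff_right_comm]

theorem falsePlus_eq_sentPlus_diff : M.falsePlus = M.sentPlus \ T := by
  rw [falsePlus, truePlus_eq_sentPlus_inter hT, Set.sdiff_self_inter]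

theorem not_tTarskiPlus_of_phi_eq {H : List α} (hH : H ∈ M.pred) (hφ : M.phi H = T) :
    ¬ M.TTarskiPlus :=
  fun h ↦ h ⟨H, hH, by rw [truePlus_eq_sentPlus_inter hT, hφ, Set.inter_comm]⟩

theorem not_fTarskiPlus_of_phi_eq {H : List α} (hH : H ∈ M.pred) (hφ : M.phi H = Tᶜ) :
    ¬ M.FTarskiPlus :=
  fun h ↦ h ⟨H, hH, by rw [falsePlus_eq_sentPlus_diff hT, hφ, Set.sdiff_eq, Set.inter_comm]⟩

end TruthSet

end SmullyanModel

namespace SmSym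

open SmullyanModel

def evenN : Set (List SmSym) := {X | Even (X.count n)}

def parityModel : SmullyanModel SmSym where
  pred := simplePred sharp
  prefixFree := simplePred_prefixFree sharp
  phi H := {X | H ++ X ∈ evenN}

theorem parityModel_isNModel : parityModel.IsNModel n := by
  rintro H ⟨X, hX, rfl⟩
  refine ⟨⟨n :: X, by simpa using hX, rfl⟩, ?_⟩
  ext Y
  simp [parityModel, evenN, add_right_comm _ 1, Nat.even_add_one]

theorem parityModel_phi_sharp : parityModel.phi [sharp] = evenN := by
  ext Y
  simp [parityModel, evenN]

theorem parityModel_phi_n_sharp : parityModel.phi [n, sharp] = evenNᶜ := by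
  ext Y
  simp [parityModel, evenN, parity_simps]

theorem parityModel_not_phi_subset_sent (H : List SmSym) :
    ¬ parityModel.phi H ⊆ parityModel.sent := by
  intro hsub
  -- `ε` and `n` have opposite parity, so one of them lies in `Φ(H)`.
  obtain ⟨X, hX, hsharp⟩ : ∃ X ∈ parityModel.phi H, sharp ∉ X := by
    by_cases hH : Even (H.count n)
    · exact ⟨[], by simpa [parityModel, evenN] using hH, by simp⟩
    · exact ⟨[n], by simpa [parityModel, evenN, Nat.even_add_one] using hH, by simp⟩
  exact hsharp (sharp_mem_of_mem_sent rfl (hsub hX))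

end SmSym

/-- There is an `n`-simple model (Σ = {n, ♯}, Φ(♯) = {X : the number of occurrences
of n in X is even}) satisfying both F-Tarski and T-Tarski but neither F-Tarski⁺ nor
T-Tarski⁺. -/
theorem stmt_15 :
    ∃ M : SmullyanModel SmSym,
      M.pred = SmullyanModel.simplePred SmSym.sharp ∧
      M.IsNModel SmSym.n ∧
      M.phi [SmSym.sharp] = {X : List SmSym | Even (X.count SmSym.n)} ∧
      M.FTarski ∧
      M.TTarski ∧
      ¬ M.FTarskiPlus ∧
      ¬ M.TTarskiPlus := by
  have hT : ∀ H ∈ SmSym.parityModel.pred,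
      SmSym.parityModel.phi H = {X | H ++ X ∈ SmSym.evenN} := fun _ _ ↦ rfl
  have hsharp : [SmSym.sharp] ∈ SmSym.parityModel.pred := ⟨[], by simp, rfl⟩
  have hn_sharp : [SmSym.n, SmSym.sharp] ∈ SmSym.parityModel.pred := ⟨[SmSym.n], by simp, rfl⟩
  exact ⟨SmSym.parityModel, rfl, SmSym.parityModel_isNModel, SmSym.parityModel_phi_sharp,
    SmSym.parityModel.fTarski_of_forall_not_subset_sent
      fun H _ ↦ SmSym.parityModel_not_phi_subset_sent H,
    SmSym.parityModel.tTarski_of_forall_not_subset_sent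
      fun H _ ↦ SmSym.parityModel_not_phi_subset_sent H,
    SmullyanModel.not_fTarskiPlus_of_phi_eq hT hn_sharp SmSym.parityModel_phi_n_sharp,
    SmullyanModel.not_tTarskiPlus_of_phi_eq hT hsharp SmSym.parityModel_phi_sharp⟩
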